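/- arXiv:2202.01967 — 4 statements merged into one kernel-verified Lean document; each statement's English description precedes it below -/
import Mathlib

section
/- Let θ ∈ [-π/2, π/2], c = sin θ, and G(z) = (1/2)(z + 1/z) - i·c·Log z. Then the function z ↦ S_G(z) - (4i sin θ)/z, where S_G = (G''/G')' - (1/2)(G''/G')² is the Schwarzian derivative of G, extends holomorphically to a punctured neighborhood of 0 with removable singularity at 0; equivalently, S_G has a simple pole at 0 with residue 4i sin θ. -/
open Complex Real Metric Set Filter Topology

/-!
Write `G'(z) = p(z) z⁻²` with `p(z) = (z² - 2icz - 1)/2`, holomorphic and zero-free near `0`.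
Then `G''/G' = p'/p - 2/z`. The summand `-2/z` is the pre-Schwarzian of the Möbius map `-1/z`,
so it contributes nothing by itself: `(-2/z)' - (-2/z)²/2 = 0`. The only singular term left is
the cross term `2p'/(zp)`, whose residue is `2p'(0)/p(0) = 4ic`.
-/

noncomputable def schwarzian (f : ℂ → ℂ) (z : ℂ) : ℂ :=
  deriv (logDeriv (deriv f)) z - 1 / 2 * logDeriv (deriv f) z ^ 2

section ProductWithPower

variable {f p : ℂ → ℂ} {U : Set ℂ} {n : ℤ}

theorem logDeriv_deriv_eqOn_of_hasDerivAt_mul_zpow (hU : IsOpen U)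
    (hp : DifferentiableOn ℂ p U) (hU0 : ∀ z ∈ U, z ≠ 0 ∧ p z ≠ 0)
    (hf : ∀ z ∈ U, HasDerivAt f (p z * z ^ n) z) :
    EqOn (logDeriv (deriv f)) (fun z => logDeriv p z + n / z) U := by
  intro z hz
  obtain ⟨hz0, hpz⟩ := hU0 z hz
  have hderiv : deriv f =ᶠ[𝓝 z] fun w => p w * w ^ n :=
    eventually_of_mem (hU.mem_nhds hz) fun w hw => (hf w hw).deriv
  rw [(logDeriv_congr_nhds hderiv).eq_of_nhds,
    logDeriv_mul (g := (· ^ n)) z hpz (zpow_ne_zero n hz0)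
      (hp.differentiableAt (hU.mem_nhds hz)) (differentiableAt_zpow.2 (Or.inl hz0)),
    logDeriv_zpow]

theorem schwarzian_eq_of_hasDerivAt_mul_zpow (hU : IsOpen U)
    (hp : DifferentiableOn ℂ p U) (hU0 : ∀ z ∈ U, z ≠ 0 ∧ p z ≠ 0)
    (hf : ∀ z ∈ U, HasDerivAt f (p z * z ^ n) z) {z : ℂ} (hz : z ∈ U) :
    schwarzian f z = deriv (logDeriv p) z - 1 / 2 * logDeriv p z ^ 2
      - n * logDeriv p z / z - n * (n + 2) / (2 * z ^ 2) := by
  have hpre := logDeriv_deriv_eqOn_of_hasDerivAt_mul_zpow hU hp hU0 hf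
  have hz0 := (hU0 z hz).1
  have hLp : DifferentiableAt ℂ (logDeriv p) z :=
    ((hp.deriv hU).div hp fun w hw => (hU0 w hw).2).differentiableAt (hU.mem_nhds hz)
  have hderiv : HasDerivAt (fun w => logDeriv p w + n / w)
      (deriv (logDeriv p) z + n * -(z ^ 2)⁻¹) z := by
    simpa only [div_eq_mul_inv] using
      hLp.hasDerivAt.fun_add ((hasDerivAt_inv hz0).const_mul (n : ℂ))
  rw [schwarzian, (eventuallyEq_of_mem (hU.mem_nhds hz) hpre).deriv_eq, hderiv.deriv, hpre hz]
  field_simp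
  ring

end ProductWithPower

/-- `G'(z) = derivNumerator c z * z⁻²` for `G(z) = (z + 1/z)/2 - i c Log z`. -/
noncomputable def derivNumerator (c z : ℂ) : ℂ :=
  (z ^ 2 - 2 * I * c * z - 1) / 2

noncomputable def schwarzianRegularPart (c z : ℂ) : ℂ :=
  deriv (logDeriv (derivNumerator c)) z - 1 / 2 * logDeriv (derivNumerator c) z ^ 2
    + (2 - 2 * I * c * z - 4 * c ^ 2) / derivNumerator c z

section JoukowskiLog

variable {c z : ℂ}

theorem hasDerivAt_joukowski_sub_mul_log (hz : z ∈ slitPlane) :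
    HasDerivAt (fun w : ℂ => 1 / 2 * (w + 1 / w) - I * c * log w)
      (derivNumerator c z * z ^ (-2 : ℤ)) z := by
  have hz0 := slitPlane_ne_zero hz
  have h := (((hasDerivAt_id' z).fun_add (hasDerivAt_inv hz0)).const_mul (1 / 2 : ℂ)).fun_sub
    ((hasDerivAt_log hz).const_mul (I * c))
  have hderiv :
      derivNumerator c z * z ^ (-2 : ℤ) = 1 / 2 * (1 + -(z ^ 2)⁻¹) - I * c * z⁻¹ := by
    rw [derivNumerator, zpow_neg, zpow_ofNat]
    field_simp
    ring
  simpa only [hderiv, one_div] using h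

theorem differentiable_derivNumerator : Differentiable ℂ (derivNumerator c) := by
  unfold derivNumerator
  fun_prop

theorem deriv_derivNumerator : deriv (derivNumerator c) = fun z => z - I * c := by
  funext z
  refine (((hasDerivAt_pow 2 z).sub ((hasDerivAt_id z).const_mul (2 * I * c))).sub_const 1
    |>.div_const 2).deriv.trans ?_
  ring

theorem derivNumerator_ne_zero (hc : ‖c‖ ≤ 1) (hz : ‖z‖ < 1 / 4) :
    derivNumerator c z ≠ 0 := by
  refine div_ne_zero (fun h => ?_) two_ne_zero
  have hnorm : ‖z‖ * ‖z - 2 * I * c‖ = 1 := by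
    rw [← norm_mul, show z * (z - 2 * I * c) = 1 by linear_combination h, norm_one]
  have htri : ‖z - 2 * I * c‖ ≤ ‖z‖ + 2 * ‖c‖ := by
    simpa using norm_sub_le z (2 * I * c)
  nlinarith [norm_nonneg z]

theorem differentiableOn_logDeriv_derivNumerator (hc : ‖c‖ ≤ 1) :
    DifferentiableOn ℂ (logDeriv (derivNumerator c)) (ball 0 (1 / 4)) := by
  rw [logDeriv, deriv_derivNumerator]
  exact (by fun_prop : Differentiable ℂ _).differentiableOn.div
    differentiable_derivNumerator.differentiableOn
    fun z hz => derivNumerator_ne_zero hc (mem_ball_zero_iff.1 hz)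

theorem differentiableOn_schwarzianRegularPart (hc : ‖c‖ ≤ 1) :
    DifferentiableOn ℂ (schwarzianRegularPart c) (ball 0 (1 / 4)) := by
  have hL := differentiableOn_logDeriv_derivNumerator hc
  exact ((hL.deriv isOpen_ball).sub ((hL.pow 2).const_mul _)).add
    ((by fun_prop : Differentiable ℂ _).differentiableOn.div
      differentiable_derivNumerator.differentiableOn
      fun z hz => derivNumerator_ne_zero hc (mem_ball_zero_iff.1 hz))

theorem two_mul_logDeriv_derivNumerator_div_sub (hz : z ≠ 0) (hp : derivNumerator c z ≠ 0) :
    2 * logDeriv (derivNumerator c) z / z - 4 * I * c / z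
      = (2 - 2 * I * c * z - 4 * c ^ 2) / derivNumerator c z := by
  have hp2 : 2 * derivNumerator c z = z ^ 2 - 2 * I * c * z - 1 := by
    rw [derivNumerator]
    ring
  rw [logDeriv_apply, deriv_derivNumerator]
  field_simp
  linear_combination (-2 * I * c) * hp2 + 4 * c ^ 2 * z * I_sq

theorem schwarzian_joukowski_sub_mul_log_sub (hc : ‖c‖ ≤ 1) (hz : z ∈ ball 0 (1 / 4))
    (hzs : z ∈ slitPlane) :
    schwarzian (fun w : ℂ => 1 / 2 * (w + 1 / w) - I * c * log w) z - 4 * I * c / z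
      = schwarzianRegularPart c z := by
  have hp0 : ∀ w ∈ ball (0 : ℂ) (1 / 4), derivNumerator c w ≠ 0 := fun w hw =>
    derivNumerator_ne_zero hc (mem_ball_zero_iff.1 hw)
  rw [schwarzian_eq_of_hasDerivAt_mul_zpow (n := -2) (isOpen_slitPlane.inter isOpen_ball)
      differentiable_derivNumerator.differentiableOn
      (fun w hw => ⟨slitPlane_ne_zero hw.1, hp0 w hw.2⟩)
      (fun w hw => hasDerivAt_joukowski_sub_mul_log hw.1) ⟨hzs, hz⟩,
    schwarzianRegularPart,
    ← two_mul_logDeriv_derivNumerator_div_sub (slitPlane_ne_zero hzs) (hp0 z hz)]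
  push_cast
  ring

end JoukowskiLog

theorem schwarzian_G_theta_simple_pole_general (θ : ℝ)
    (G SG : ℂ → ℂ)
    (hG : G = fun w : ℂ => (1 / 2) * (w + 1 / w) - Complex.I * (Real.sin θ : ℂ) * Complex.log w)
    (hSG : SG = fun z : ℂ =>
      deriv (fun w => deriv (deriv G) w / deriv G w) z
        - (1 / 2) * (deriv (deriv G) z / deriv G z) ^ 2) :
    ∃ U : Set ℂ, IsOpen U ∧ (0 : ℂ) ∈ U ∧ ∃ g : ℂ → ℂ, DifferentiableOn ℂ g U ∧
      ∀ z ∈ U, z ∈ Complex.slitPlane →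
        SG z - (4 * Complex.I * (Real.sin θ : ℂ)) / z = g z := by
  have hc : ‖(Real.sin θ : ℂ)‖ ≤ 1 := by
    rw [norm_real, Real.norm_eq_abs]
    exact abs_sin_le_one θ
  subst hG hSG
  exact ⟨ball 0 (1 / 4), isOpen_ball, mem_ball_self (by norm_num), _,
    differentiableOn_schwarzianRegularPart hc,
    fun z hz hzs => schwarzian_joukowski_sub_mul_log_sub hc hz hzs⟩

/-- For `θ ∈ [-π/2, π/2]` and `G(z) = (1/2)(z + 1/z) - i sin θ · Log z`, the
Schwarzian derivative `S_G = (G''/G')' - (1/2)(G''/G')²` has a simple pole at `0`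
with residue `4 i sin θ`: the function `z ↦ S_G z - 4 i sin θ / z` agrees, on the
slit-plane part of a neighborhood of `0`, with a function holomorphic in a full
neighborhood of `0`. -/
theorem schwarzian_G_theta_simple_pole (θ : ℝ) (hθ : θ ∈ Set.Icc (-(π / 2)) (π / 2))
    (G SG : ℂ → ℂ)
    (hG : G = fun w : ℂ => (1 / 2) * (w + 1 / w) - Complex.I * (Real.sin θ : ℂ) * Complex.log w)
    (hSG : SG = fun z : ℂ =>
      deriv (fun w => deriv (deriv G) w / deriv G w) z
        - (1 / 2) * (deriv (deriv G) z / deriv G z) ^ 2) :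
    ∃ U : Set ℂ, IsOpen U ∧ (0 : ℂ) ∈ U ∧ ∃ g : ℂ → ℂ, DifferentiableOn ℂ g U ∧
      ∀ z ∈ U, z ∈ Complex.slitPlane →
        SG z - (4 * Complex.I * (Real.sin θ : ℂ)) / z = g z :=
  schwarzian_G_theta_simple_pole_general θ G SG hG hSG
end

section
/- Let θ ∈ [-π/2, π/2], A = (π/2) sin θ, and B = cos θ + θ sin θ. Then B ≥ |A|, with equality if and only if θ = π/2 or θ = -π/2. -/
open Real

lemma key_ineq {x : ℝ} (h0 : 0 ≤ x) (h1 : x ≤ π / 2) :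
    x * Real.cos x ≤ Real.sin x ∧ (x * Real.cos x = Real.sin x ↔ x = 0) := by
  rcases eq_or_lt_of_le h0 with rfl | hpos
  · simp
  · have hlt : x * Real.cos x < Real.sin x := by
      rcases eq_or_lt_of_le h1 with rfl | h1'
      · simp
      · have htan := Real.lt_tan hpos h1'
        have hc : 0 < Real.cos x := Real.cos_pos_of_mem_Ioo ⟨by linarith [Real.pi_pos], h1'⟩
        rw [Real.tan_eq_sin_div_cos, lt_div_iff₀ hc] at htan
        exact htan
    exact ⟨hlt.le, by constructor <;> intro h <;> [exact absurd h hlt.ne; linarith]⟩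

lemma main_nonneg {t : ℝ} (h0 : 0 ≤ t) (h1 : t ≤ π / 2) :
    (π / 2) * Real.sin t ≤ Real.cos t + t * Real.sin t ∧
    (Real.cos t + t * Real.sin t = (π / 2) * Real.sin t ↔ t = π / 2) := by
  have hx0 : 0 ≤ π / 2 - t := by linarith
  have hx1 : π / 2 - t ≤ π / 2 := by linarith
  have hcos : Real.cos t = Real.sin (π / 2 - t) := (Real.sin_pi_div_two_sub t).symm
  have hsin : Real.sin t = Real.cos (π / 2 - t) := (Real.cos_pi_div_two_sub t).symm
  obtain ⟨hk, hke⟩ := key_ineq hx0 hx1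
  constructor
  · rw [hcos, hsin]; nlinarith
  · rw [hcos, hsin]
    constructor
    · intro h
      have h2 : (π / 2 - t) * Real.cos (π / 2 - t) = Real.sin (π / 2 - t) := by nlinarith
      have := hke.mp h2
      linarith
    · intro h
      rw [h]
      simp

/-- For `θ ∈ [-π/2, π/2]`, `A = (π/2) sin θ` and `B = cos θ + θ sin θ`, one has
`B ≥ |A|`, with equality if and only if `θ = π/2` or `θ = -π/2`. -/
theorem B_ge_abs_A (θ : ℝ) (hθ : θ ∈ Set.Icc (-(π / 2)) (π / 2)) :
    |(π / 2) * Real.sin θ| ≤ Real.cos θ + θ * Real.sin θ ∧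
    (Real.cos θ + θ * Real.sin θ = |(π / 2) * Real.sin θ| ↔ θ = π / 2 ∨ θ = -(π / 2)) := by
  obtain ⟨hθ1, hθ2⟩ := hθ
  have hpi : 0 < π := Real.pi_pos
  have ht0 : 0 ≤ |θ| := abs_nonneg θ
  have ht1 : |θ| ≤ π / 2 := abs_le.mpr ⟨hθ1, hθ2⟩
  have hsinabs : Real.sin |θ| = |Real.sin θ| := by
    rcases abs_cases θ with ⟨h, h'⟩ | ⟨h, h'⟩
    · rw [h, abs_of_nonneg (Real.sin_nonneg_of_nonneg_of_le_pi h' (by linarith))]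
    · rw [h, Real.sin_neg,
        abs_of_nonpos (Real.sin_nonpos_of_nonpos_of_neg_pi_le (by linarith) (by linarith))]
  have habsA : |(π / 2) * Real.sin θ| = (π / 2) * Real.sin |θ| := by
    rw [abs_mul, abs_of_nonneg (by positivity : (0:ℝ) ≤ π / 2), hsinabs]
  have hB : Real.cos θ + θ * Real.sin θ = Real.cos |θ| + |θ| * Real.sin |θ| := by
    rcases abs_cases θ with ⟨h, _⟩ | ⟨h, _⟩
    · rw [h]
    · rw [h, Real.cos_neg, Real.sin_neg]; ring
  obtain ⟨hle, heq⟩ := main_nonneg ht0 ht1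
  rw [habsA, hB]
  refine ⟨hle, ?_⟩
  rw [heq, abs_eq (by positivity : (0:ℝ) ≤ π / 2)]
end

section
/- Let n ≥ 2, 0 = x₁ < x₂ < ⋯ < xₙ = 1 and 0 = y₁ < y₂ < ⋯ < yₙ. Suppose for each j = 1,…,n-1 there is an increasing real Möbius map T_j with T_j(x_j) = y_j, T_j(x_{j+1}) = y_{j+1}, and T'_j(x_{j+1}) = T'_{j+1}(x_{j+1}) for j ≤ n-2 (continuous matching of derivatives), with T'_1(x₁) = 1. Then T'_{n-1}(xₙ) = 1 if and only if the alternating product (yₙ-y_{n-1})/(xₙ-x_{n-1}) · (x_{n-1}-x_{n-2})/(y_{n-1}-y_{n-2}) · (y_{n-2}-y_{n-3})/(x_{n-2}-x_{n-3}) ⋯ equals 1, where the last factor is (y₂-y₁)/(x₂-x₁) if n is even and (x₂-x₁)/(y₂-y₁) if n is odd. -/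
open Finset

/-! Every real Möbius map `T` satisfies `T'(a) T'(b) = ((T b - T a) / (b - a))²` for `a ≠ b`.
Writing `Rⱼ` for the difference quotient of the `j`-th piece, the derivative at the right end of
the `j`-th piece is therefore `Rⱼ²` divided by the derivative at its left end, which by matching is
the derivative at the right end of the previous piece. Starting from `1`, the right derivative of
the `m`-th piece is the square of the alternating product `Rₘ Rₘ₋₁⁻¹ Rₘ₋₂ ⋯`, and since all `Rⱼ`
are positive that square is `1` exactly when the product is. -/

section Mobius

variable {𝕜 : Type*} [NontriviallyNormedField 𝕜]

theorem deriv_mobius (p q r s a : 𝕜) (ha : r * a + s ≠ 0) :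
    deriv (fun z => (p * z + q) / (r * z + s)) a = (p * s - q * r) / (r * a + s) ^ 2 := by
  have hnum : HasDerivAt (fun z : 𝕜 => p * z + q) p a := by
    simpa using ((hasDerivAt_id a).const_mul p).add_const q
  have hden : HasDerivAt (fun z : 𝕜 => r * z + s) r a := by
    simpa using ((hasDerivAt_id a).const_mul r).add_const s
  exact (hnum.div hden ha).deriv.trans (by ring)

theorem deriv_mobius_mul_deriv_mobius {p q r s a b : 𝕜} (hab : a ≠ b)
    (ha : r * a + s ≠ 0) (hb : r * b + s ≠ 0) :
    deriv (fun z => (p * z + q) / (r * z + s)) a * deriv (fun z => (p * z + q) / (r * z + s)) b =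
      (((p * b + q) / (r * b + s) - (p * a + q) / (r * a + s)) / (b - a)) ^ 2 := by
  have hba : b - a ≠ 0 := sub_ne_zero.mpr hab.symm
  rw [deriv_mobius p q r s a ha, deriv_mobius p q r s b hb]
  field_simp
  ring

end Mobius

section AltProd

variable {K : Type*} [Field K]

def altProd (R : ℕ → K) (m : ℕ) : K :=
  ∏ k ∈ Icc 1 m, R k ^ ((-1 : ℤ) ^ (m - k))

theorem altProd_one (R : ℕ → K) : altProd R 1 = R 1 := by
  simp [altProd]

theorem altProd_succ (R : ℕ → K) {m : ℕ} (hm : 1 ≤ m) :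
    altProd R (m + 1) = R (m + 1) * (altProd R m)⁻¹ := by
  rw [altProd, prod_Icc_succ_top (by omega), Nat.sub_self, pow_zero, zpow_one, mul_comm,
    altProd, ← prod_inv_distrib]
  congr 1
  refine prod_congr rfl fun k hk => ?_
  rw [Nat.sub_add_comm (mem_Icc.mp hk).2, pow_succ, mul_neg_one, zpow_neg]

theorem altProd_ne_zero {R : ℕ → K} {m : ℕ} (hR : ∀ k, 1 ≤ k → k ≤ m → R k ≠ 0) :
    altProd R m ≠ 0 :=
  prod_ne_zero_iff.mpr fun k hk => zpow_ne_zero _ (hR k (mem_Icc.mp hk).1 (mem_Icc.mp hk).2)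

theorem altProd_pos [LinearOrder K] [IsStrictOrderedRing K] {R : ℕ → K} {m : ℕ} (hR : ∀ k, 1 ≤ k → k ≤ m → 0 < R k) :
    0 < altProd R m :=
  prod_pos fun k hk => zpow_pos (hR k (mem_Icc.mp hk).1 (mem_Icc.mp hk).2) _

/-- Read `D j`, `E j` as the derivatives of the `j`-th piece at its left and right end. -/
theorem right_eq_altProd_sq {D E R : ℕ → K} {N : ℕ} (hstart : D 1 = 1)
    (hprod : ∀ j, 1 ≤ j → j ≤ N → D j * E j = R j ^ 2)
    (hmatch : ∀ j, 1 ≤ j → j < N → E j = D (j + 1))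
    (hR : ∀ j, 1 ≤ j → j ≤ N → R j ≠ 0) :
    ∀ m, 1 ≤ m → m ≤ N → E m = altProd R m ^ 2 := by
  intro m hm
  induction m, hm using Nat.le_induction with
  | base =>
    intro hN
    simpa [hstart, altProd_one] using hprod 1 le_rfl hN
  | succ m hm ih =>
    intro hN
    have hleft : D (m + 1) = altProd R m ^ 2 := (hmatch m hm (by omega)).symm.trans (ih (by omega))
    have hQ : altProd R m ≠ 0 := altProd_ne_zero fun k hk _ => hR k hk (by omega)
    have hstep := hprod (m + 1) (by omega) hN
    rw [hleft] at hstep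
    rw [altProd_succ R hm]
    field_simp
    linear_combination hstep

end AltProd

theorem piecewise_mobius_derivative_product_general
    (n : ℕ) (hn : 2 ≤ n) (x y : ℕ → ℝ) (T : ℕ → ℝ → ℝ)
    (hxmono : ∀ j, 1 ≤ j → j < n → x j < x (j + 1))
    (hymono : ∀ j, 1 ≤ j → j < n → y j < y (j + 1))
    (hmob : ∀ j ∈ Finset.Icc 1 (n - 1), ∃ p q r s : ℝ,
      p * s - q * r > 0 ∧ r * x j + s ≠ 0 ∧ r * x (j + 1) + s ≠ 0 ∧
      T j = fun z => (p * z + q) / (r * z + s))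
    (hval : ∀ j ∈ Finset.Icc 1 (n - 1), T j (x j) = y j ∧ T j (x (j + 1)) = y (j + 1))
    (hmatch : ∀ j ∈ Finset.Icc 1 (n - 2),
      deriv (T j) (x (j + 1)) = deriv (T (j + 1)) (x (j + 1)))
    (hstart : deriv (T 1) (x 1) = 1) :
    deriv (T (n - 1)) (x n) = 1 ↔
      ∏ j ∈ Finset.Icc 1 (n - 1),
        ((y (j + 1) - y j) / (x (j + 1) - x j)) ^ ((-1 : ℤ) ^ (n - 1 - j)) = 1 := by
  set R : ℕ → ℝ := fun j => (y (j + 1) - y j) / (x (j + 1) - x j)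
  have hRpos : ∀ j, 1 ≤ j → j ≤ n - 1 → 0 < R j := fun j hj hjn =>
    div_pos (sub_pos.mpr (hymono j hj (by omega))) (sub_pos.mpr (hxmono j hj (by omega)))
  have hprod : ∀ j, 1 ≤ j → j ≤ n - 1 →
      deriv (T j) (x j) * deriv (T j) (x (j + 1)) = R j ^ 2 := by
    intro j hj hjn
    have hmem : j ∈ Icc 1 (n - 1) := mem_Icc.mpr ⟨hj, hjn⟩
    obtain ⟨p, q, r, s, -, ha, hb, hT⟩ := hmob j hmem
    obtain ⟨hTa, hTb⟩ := hval j hmem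
    rw [show R j = (T j (x (j + 1)) - T j (x j)) / (x (j + 1) - x j) by rw [hTa, hTb], hT]
    exact deriv_mobius_mul_deriv_mobius (hxmono j hj (by omega)).ne ha hb
  have hend := right_eq_altProd_sq hstart hprod
    (fun j hj hjn => hmatch j (mem_Icc.mpr ⟨hj, by omega⟩))
    (fun j hj hjn => (hRpos j hj hjn).ne') (n - 1) (by omega) le_rfl
  rw [Nat.sub_add_cancel (by omega : 1 ≤ n)] at hend
  rw [hend, pow_eq_one_iff_of_nonneg (altProd_pos hRpos).le two_ne_zero]
  rfl

/-- Propagating derivatives of increasing real Möbius maps through the chain of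
points `0 = x₁ < ⋯ < xₙ = 1`, `0 = y₁ < ⋯ < yₙ`: if `T j` is an increasing real
Möbius map sending `x j, x (j+1)` to `y j, y (j+1)`, derivatives match at interior
points, and `T₁'(x₁) = 1`, then `T_{n-1}'(xₙ) = 1` if and only if the alternating
product `∏_{j=1}^{n-1} ((y_{j+1}-y_j)/(x_{j+1}-x_j))^{(-1)^{n-1-j}}` equals `1`. -/
theorem piecewise_mobius_derivative_product
    (n : ℕ) (hn : 2 ≤ n) (x y : ℕ → ℝ) (T : ℕ → ℝ → ℝ)
    (hx1 : x 1 = 0) (hxn : x n = 1) (hy1 : y 1 = 0)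
    (hxmono : ∀ j, 1 ≤ j → j < n → x j < x (j + 1))
    (hymono : ∀ j, 1 ≤ j → j < n → y j < y (j + 1))
    (hmob : ∀ j ∈ Finset.Icc 1 (n - 1), ∃ p q r s : ℝ,
      p * s - q * r > 0 ∧ r * x j + s ≠ 0 ∧ r * x (j + 1) + s ≠ 0 ∧
      T j = fun z => (p * z + q) / (r * z + s))
    (hval : ∀ j ∈ Finset.Icc 1 (n - 1), T j (x j) = y j ∧ T j (x (j + 1)) = y (j + 1))
    (hmatch : ∀ j ∈ Finset.Icc 1 (n - 2),
      deriv (T j) (x (j + 1)) = deriv (T (j + 1)) (x (j + 1)))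
    (hstart : deriv (T 1) (x 1) = 1) :
    deriv (T (n - 1)) (x n) = 1 ↔
      ∏ j ∈ Finset.Icc 1 (n - 1),
        ((y (j + 1) - y j) / (x (j + 1) - x j)) ^ ((-1 : ℤ) ^ (n - 1 - j)) = 1 :=
  piecewise_mobius_derivative_product_general n hn x y T hxmono hymono hmob hval hmatch hstart
end

section
/- Let 0 = x₁ < x₂ < x₃ = 1 and 0 = y₁ < y₂ < y₃. If there exists a C¹ increasing homeomorphism ω of the extended real line, piecewise Möbius with breakpoints only at ∞, 0, x₂, 1, fixing ∞, with ω'(∞) = 1 (i.e., ω(x) = x + const for x < 0 and x > 1), and ω(x_j) = y_j for j = 1,2,3, then x₂ = y₂/y₃. Consequently the cross-ratio of (∞, 0, x₂, 1) equals the cross-ratio of (∞, 0, y₂, y₃). -/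
/-!
On an interval where `ω` is a Möbius map `x ↦ (p x + q)/(r x + s)`, one has the identity
`(ω y - ω x)² = ω'(x) ω'(y) (y - x)²`, and by continuity of `ω` and `ω'` it survives at the
endpoints. Applied to `[0, x₂]` and `[x₂, 1]`, where `ω'(0) = ω'(1) = 1` because `ω` is a
translation outside `[0, 1]`, it gives `y₂² = ω'(x₂) x₂²` and `(y₃ - y₂)² = ω'(x₂) (1 - x₂)²`.
Eliminating `ω'(x₂)` and taking positive square roots yields `y₂ (1 - x₂) = (y₃ - y₂) x₂`.
-/

open Filter Set Topology

section Mobius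

variable {𝕜 : Type*}

theorem mobius_sub_sq [Field 𝕜] {p q r s x y : 𝕜} (hx : r * x + s ≠ 0) (hy : r * y + s ≠ 0) :
    ((p * y + q) / (r * y + s) - (p * x + q) / (r * x + s)) ^ 2 =
      (p * s - q * r) / (r * x + s) ^ 2 * ((p * s - q * r) / (r * y + s) ^ 2) * (y - x) ^ 2 := by
  rw [div_sub_div _ _ hy hx, div_mul_div_comm, div_mul_eq_mul_div, div_pow, div_eq_div_iff]
  · ring
  · exact pow_ne_zero _ (mul_ne_zero hy hx)
  · exact mul_ne_zero (pow_ne_zero _ hx) (pow_ne_zero _ hy)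

theorem hasDerivAt_mobius [NontriviallyNormedField 𝕜] {p q r s x : 𝕜} (hx : r * x + s ≠ 0) :
    HasDerivAt (fun y => (p * y + q) / (r * y + s)) ((p * s - q * r) / (r * x + s) ^ 2) x := by
  have hnum : HasDerivAt (fun y => p * y + q) p x := by
    simpa using ((hasDerivAt_id x).const_mul p).add_const q
  have hden : HasDerivAt (fun y => r * y + s) r x := by
    simpa using ((hasDerivAt_id x).const_mul r).add_const s
  exact (hnum.div hden hx).congr_deriv (by ring)

end Mobius

theorem sq_sub_eq_deriv_mul_deriv_of_eqOn_mobius {ω : ℝ → ℝ} (hω : Continuous ω)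
    (hω' : Continuous (deriv ω)) {a b p q r s : ℝ} (hab : a < b)
    (hmob : ∀ x ∈ Ioo a b, r * x + s ≠ 0 ∧ ω x = (p * x + q) / (r * x + s)) :
    (ω b - ω a) ^ 2 = deriv ω a * deriv ω b * (b - a) ^ 2 := by
  have hderiv : ∀ x ∈ Ioo a b, deriv ω x = (p * s - q * r) / (r * x + s) ^ 2 := fun x hx => by
    have hev : ω =ᶠ[𝓝 x] fun y => (p * y + q) / (r * y + s) := by
      filter_upwards [Ioo_mem_nhds hx.1 hx.2] with y hy using (hmob y hy).2
    rw [hev.deriv_eq, (hasDerivAt_mobius (hmob x hx).1).deriv]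
  let S : Set (ℝ × ℝ) := {z | (ω z.2 - ω z.1) ^ 2 = deriv ω z.1 * deriv ω z.2 * (z.2 - z.1) ^ 2}
  have hS : IsClosed S := isClosed_eq (by fun_prop) (by fun_prop)
  have hsub : Ioo a b ×ˢ Ioo a b ⊆ S := by
    rintro ⟨x, y⟩ ⟨hx, hy⟩
    simp only [S, mem_ofPred_eq, (hmob x hx).2, (hmob y hy).2, hderiv x hx, hderiv y hy]
    exact mobius_sub_sq (hmob x hx).1 (hmob y hy).1
  have hmem : (a, b) ∈ closure (Ioo a b ×ˢ Ioo a b) := by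
    rw [closure_prod_eq, closure_Ioo hab.ne]
    exact ⟨left_mem_Icc.2 hab.le, right_mem_Icc.2 hab.le⟩
  exact closure_minimal hsub hS hmem

theorem deriv_eq_one_of_mem_closure {ω : ℝ → ℝ} (hω' : Continuous (deriv ω)) {U : Set ℝ}
    (hU : IsOpen U) {b : ℝ} (h : ∀ x ∈ U, ω x = x + b) {c : ℝ} (hc : c ∈ closure U) :
    deriv ω c = 1 := by
  have hsub : U ⊆ {x | deriv ω x = 1} := fun x hx => by
    have hev : ω =ᶠ[𝓝 x] fun y => y + b := by
      filter_upwards [hU.mem_nhds hx] with y hy using h y hy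
    simp [hev.deriv_eq]
  exact closure_minimal hsub (isClosed_eq hω' continuous_const) hc

theorem modulus_symmetry_four_vertices_general
    (x₂ y₂ y₃ : ℝ) (hx₂ : x₂ ∈ Set.Ioo (0 : ℝ) 1) (hy₂ : 0 < y₂) (hy₂₃ : y₂ < y₃)
    (ω : ℝ → ℝ)
    (hC1 : ContDiff ℝ 1 ω)
    (hleft : ∃ b : ℝ, ∀ x : ℝ, x < 0 → ω x = x + b)
    (hright : ∃ b : ℝ, ∀ x : ℝ, 1 < x → ω x = x + b)
    (hmid1 : ∃ p q r s : ℝ, p * s - q * r > 0 ∧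
      ∀ x ∈ Set.Ioo (0 : ℝ) x₂, r * x + s ≠ 0 ∧ ω x = (p * x + q) / (r * x + s))
    (hmid2 : ∃ p q r s : ℝ, p * s - q * r > 0 ∧
      ∀ x ∈ Set.Ioo x₂ (1 : ℝ), r * x + s ≠ 0 ∧ ω x = (p * x + q) / (r * x + s))
    (h0 : ω 0 = 0) (hx₂v : ω x₂ = y₂) (h1 : ω 1 = y₃) :
    x₂ = y₂ / y₃ := by
  obtain ⟨hx₂0, hx₂1⟩ := hx₂
  have hω' : Continuous (deriv ω) := hC1.continuous_deriv le_rfl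
  obtain ⟨b₀, hb₀⟩ := hleft
  obtain ⟨b₁, hb₁⟩ := hright
  have hd0 : deriv ω 0 = 1 :=
    deriv_eq_one_of_mem_closure hω' isOpen_Iio hb₀ (by simp [closure_Iio])
  have hd1 : deriv ω 1 = 1 :=
    deriv_eq_one_of_mem_closure hω' isOpen_Ioi hb₁ (by simp [closure_Ioi])
  obtain ⟨p, q, r, s, -, hmob₁⟩ := hmid1
  obtain ⟨p', q', r', s', -, hmob₂⟩ := hmid2
  have e₁ := sq_sub_eq_deriv_mul_deriv_of_eqOn_mobius hC1.continuous hω' hx₂0 hmob₁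
  have e₂ := sq_sub_eq_deriv_mul_deriv_of_eqOn_mobius hC1.continuous hω' hx₂1 hmob₂
  rw [h0, hx₂v, hd0] at e₁
  rw [hx₂v, h1, hd1] at e₂
  have hsq : (y₂ * (1 - x₂)) ^ 2 = ((y₃ - y₂) * x₂) ^ 2 := by
    linear_combination (1 - x₂) ^ 2 * e₁ - x₂ ^ 2 * e₂
  have hlin : y₂ * (1 - x₂) = (y₃ - y₂) * x₂ :=
    (pow_left_inj₀ (by nlinarith) (by nlinarith) two_ne_zero).1 hsq
  rw [eq_div_iff (by linarith)]
  linarith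

/-- n = 3 case of the normalization of C¹ piecewise Möbius welding maps: if `ω`
is a C¹ increasing homeomorphism of `ℝ` (extended to fix `∞` with derivative 1,
i.e. `ω(x) = x + const` on `(-∞,0)` and on `(1,∞)`), Möbius on `(0,x₂)` and on
`(x₂,1)`, with `ω(0) = 0`, `ω(x₂) = y₂`, `ω(1) = y₃`, then `x₂ = y₂/y₃`;
equivalently the cross-ratios of `(∞,0,x₂,1)` and `(∞,0,y₂,y₃)` agree. -/
theorem modulus_symmetry_four_vertices
    (x₂ y₂ y₃ : ℝ) (hx₂ : x₂ ∈ Set.Ioo (0 : ℝ) 1) (hy₂ : 0 < y₂) (hy₂₃ : y₂ < y₃)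
    (ω : ℝ → ℝ) (hmono : StrictMono ω) (hsurj : Function.Surjective ω)
    (hC1 : ContDiff ℝ 1 ω)
    (hleft : ∃ b : ℝ, ∀ x : ℝ, x < 0 → ω x = x + b)
    (hright : ∃ b : ℝ, ∀ x : ℝ, 1 < x → ω x = x + b)
    (hmid1 : ∃ p q r s : ℝ, p * s - q * r > 0 ∧
      ∀ x ∈ Set.Ioo (0 : ℝ) x₂, r * x + s ≠ 0 ∧ ω x = (p * x + q) / (r * x + s))
    (hmid2 : ∃ p q r s : ℝ, p * s - q * r > 0 ∧
      ∀ x ∈ Set.Ioo x₂ (1 : ℝ), r * x + s ≠ 0 ∧ ω x = (p * x + q) / (r * x + s))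
    (h0 : ω 0 = 0) (hx₂v : ω x₂ = y₂) (h1 : ω 1 = y₃) :
    x₂ = y₂ / y₃ :=
  modulus_symmetry_four_vertices_general x₂ y₂ y₃ hx₂ hy₂ hy₂₃ ω hC1 hleft hright hmid1 hmid2 h0
    hx₂v h1
end
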